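/- Let s > n/2. There exists a constant C = C(s) > 0 such that for all h ∈ (0,1], all u in the standard Sobolev space H^s(R^n), and all v in the semiclassical Sobolev space H_h^s(R^n), one has ‖uv‖_{H_h^s} ≤ C ‖u‖_{H^s} ‖v‖_{H_h^s}. -/

import Mathlib

/-!
The key pointwise inequality is the semiclassical Peetre bound
`⟨hξ⟩^s ≤ 2^s ⟨t⟩^s ⟨h(ξ - t)⟩^s (⟨t⟩^{-s} + ⟨ξ - t⟩^{-s})` for `0 ≤ h ≤ 1`, obtained by comparing
`|t|` with `|ξ - t|`: when `|ξ - t|` dominates, `⟨hξ⟩ ≲ ⟨h(ξ - t)⟩`; when `|t|` dominates, the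
missing factor `⟨t⟩ / ⟨ξ - t⟩` comes from the `H^s` weight of `f`, which carries no `h`.
Inserting it under the convolution integral and applying Cauchy–Schwarz in `t`, the kernel
`⟨t⟩^{-s} + ⟨ξ - t⟩^{-s}` contributes at most `4 ‖⟨·⟩^{-s}‖²_{L²}` uniformly in `ξ`, which is finite
exactly because `2s > n`; integrating in `ξ`, Tonelli leaves `‖⟨·⟩^s f‖²_{L²} ‖⟨h·⟩^s g‖²_{L²}`.
All estimates are carried out with lower Lebesgue integrals, so integrability of the
left-hand side comes out of the bound instead of being needed for it.
-/

open MeasureTheory Real Set Convolution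
open scoped ENNReal

theorem one_add_sq_mul_sq_le {h x y z : ℝ} (h0 : 0 ≤ h) (h1 : h ≤ 1) (hy : 0 ≤ y) (hz : 0 ≤ z)
    (hzxy : z ≤ x + y) :
    1 + h ^ 2 * z ^ 2 ≤ 4 * (1 + h ^ 2 * y ^ 2) * max 1 ((1 + x ^ 2) / (1 + y ^ 2)) := by
  have hh2 : h ^ 2 ≤ 1 := pow_le_one₀ h0 h1
  rcases le_total x y with hxy | hyx
  · have hz2 : z ^ 2 ≤ (2 * y) ^ 2 := pow_le_pow_left₀ hz (by linarith) 2
    calc 1 + h ^ 2 * z ^ 2 ≤ 4 * (1 + h ^ 2 * y ^ 2) * 1 := by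
          nlinarith [mul_le_mul_of_nonneg_left hz2 (sq_nonneg h)]
      _ ≤ _ := by gcongr; exact le_max_left _ _
  · have hz2 : z ^ 2 ≤ (2 * x) ^ 2 := pow_le_pow_left₀ hz (by linarith) 2
    calc 1 + h ^ 2 * z ^ 2 ≤ 4 * (1 + h ^ 2 * x ^ 2) := by
          nlinarith [mul_le_mul_of_nonneg_left hz2 (sq_nonneg h)]
      _ ≤ 4 * (1 + h ^ 2 * y ^ 2) * ((1 + x ^ 2) / (1 + y ^ 2)) := by
        rw [mul_assoc]
        gcongr
        rw [← mul_div_assoc, le_div_iff₀ (by positivity)]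
        -- this is `(1 - h²) (x² - y²) ≥ 0`
        nlinarith [mul_le_mul_of_nonneg_right hh2 (sub_nonneg.2 (pow_le_pow_left₀ hy hyx 2))]
      _ ≤ _ := by gcongr; exact le_max_right _ _

theorem one_add_sq_mul_norm_sq_rpow_le {E : Type*} [SeminormedAddCommGroup E] {p h : ℝ}
    (hp : 0 ≤ p) (h0 : 0 ≤ h) (h1 : h ≤ 1) (ξ t : E) :
    (1 + h ^ 2 * ‖ξ‖ ^ 2) ^ p ≤ 4 ^ p * ((1 + ‖t‖ ^ 2) ^ p * (1 + h ^ 2 * ‖ξ - t‖ ^ 2) ^ p *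
      ((1 + ‖t‖ ^ 2) ^ (-p) + (1 + ‖ξ - t‖ ^ 2) ^ (-p))) := by
  set Q := (1 + ‖t‖ ^ 2) / (1 + ‖ξ - t‖ ^ 2)
  have hQ : 0 ≤ Q := by positivity
  have hmax : max 1 Q ^ p ≤ 1 + Q ^ p := by
    rcases le_total 1 Q with h1Q | hQ1
    · rw [max_eq_right h1Q]; linarith [zero_le_one' ℝ]
    · rw [max_eq_left hQ1, one_rpow]; linarith [rpow_nonneg hQ p]
  have hexpand : (1 + ‖t‖ ^ 2) ^ p * ((1 + ‖t‖ ^ 2) ^ (-p) + (1 + ‖ξ - t‖ ^ 2) ^ (-p)) =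
      1 + Q ^ p := by
    rw [mul_add, ← rpow_add (by positivity), add_neg_cancel, rpow_zero,
      div_rpow (by positivity) (by positivity), rpow_neg (by positivity), div_eq_mul_inv]
  calc (1 + h ^ 2 * ‖ξ‖ ^ 2) ^ p
      ≤ (4 * (1 + h ^ 2 * ‖ξ - t‖ ^ 2) * max 1 Q) ^ p :=
        rpow_le_rpow (by positivity) (one_add_sq_mul_sq_le h0 h1 (norm_nonneg (ξ - t))
          (norm_nonneg ξ) (norm_le_norm_add_norm_sub' ξ t)) hp
    _ = 4 ^ p * (1 + h ^ 2 * ‖ξ - t‖ ^ 2) ^ p * max 1 Q ^ p := by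
        rw [mul_rpow (by positivity) (by positivity), mul_rpow (by positivity) (by positivity)]
    _ ≤ 4 ^ p * (1 + h ^ 2 * ‖ξ - t‖ ^ 2) ^ p * (1 + Q ^ p) := by gcongr
    _ = _ := by rw [← hexpand]; ring

theorem ENNReal.add_sq_le_two_mul (a b : ℝ≥0∞) : (a + b) ^ 2 ≤ 2 * (a ^ 2 + b ^ 2) := by
  have h := ENNReal.rpow_add_le_mul_rpow_add_rpow a b one_le_two
  rwa [show (2 : ℝ) - 1 = 1 by norm_num, ENNReal.rpow_one, ENNReal.rpow_ofNat,
    ENNReal.rpow_ofNat, ENNReal.rpow_ofNat] at h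

theorem ENNReal.ofReal_rpow_div_two_sq {a : ℝ} (ha : 0 ≤ a) (p : ℝ) :
    ENNReal.ofReal (a ^ (p / 2)) ^ 2 = ENNReal.ofReal (a ^ p) := by
  rw [← ENNReal.ofReal_pow (by positivity), ← Real.rpow_two, ← Real.rpow_mul ha]
  norm_num

theorem ENNReal.lintegral_mul_sq_le {α : Type*} [MeasurableSpace α] {μ : Measure α}
    {f g : α → ℝ≥0∞} (hf : AEMeasurable f μ) (hg : AEMeasurable g μ) :
    (∫⁻ a, f a * g a ∂μ) ^ 2 ≤ (∫⁻ a, f a ^ 2 ∂μ) * ∫⁻ a, g a ^ 2 ∂μ := by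
  have hCS := ENNReal.lintegral_mul_le_Lp_mul_Lq μ Real.HolderConjugate.two_two hf hg
  simp only [Pi.mul_apply, ← ENNReal.rpow_natCast] at hCS ⊢
  calc (∫⁻ a, f a * g a ∂μ) ^ ((2 : ℕ) : ℝ)
      ≤ ((∫⁻ a, f a ^ (2 : ℝ) ∂μ) ^ (1 / 2 : ℝ) * (∫⁻ a, g a ^ (2 : ℝ) ∂μ) ^ (1 / 2 : ℝ))
          ^ ((2 : ℕ) : ℝ) := ENNReal.rpow_le_rpow hCS (by norm_num)
    _ = _ := by
      rw [ENNReal.mul_rpow_of_nonneg _ _ (by norm_num), ← ENNReal.rpow_mul, ← ENNReal.rpow_mul]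
      norm_num

section ConvolutionCauchySchwarz

variable {G : Type*} [MeasurableSpace G] [AddGroup G] [MeasurableAdd₂ G] [MeasurableNeg G]
  {μ : Measure G} [SFinite μ] [μ.IsAddRightInvariant]

theorem AEMeasurable.mul_comp_sub {F Γ : G → ℝ≥0∞} (hF : AEMeasurable F μ)
    (hΓ : AEMeasurable Γ μ) : AEMeasurable (fun p : G × G => F p.2 * Γ (p.1 - p.2)) (μ.prod μ) :=
  (hF.comp_quasiMeasurePreserving Measure.quasiMeasurePreserving_snd).mul
    (hΓ.comp_quasiMeasurePreserving (quasiMeasurePreserving_sub_of_right_invariant μ μ))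

theorem lintegral_lintegral_mul_sub {F Γ : G → ℝ≥0∞} (hF : AEMeasurable F μ)
    (hΓ : AEMeasurable Γ μ) :
    ∫⁻ ξ, ∫⁻ t, F t * Γ (ξ - t) ∂μ ∂μ = (∫⁻ t, F t ∂μ) * ∫⁻ u, Γ u ∂μ := by
  rw [lintegral_lintegral_swap (hF.mul_comp_sub hΓ)]
  calc ∫⁻ t, ∫⁻ ξ, F t * Γ (ξ - t) ∂μ ∂μ = ∫⁻ t, F t * ∫⁻ ξ, Γ (ξ - t) ∂μ ∂μ :=
        lintegral_congr fun t => lintegral_const_mul'' _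
          (hΓ.comp_quasiMeasurePreserving (measurePreserving_sub_right μ t).quasiMeasurePreserving)
    _ = (∫⁻ t, F t ∂μ) * ∫⁻ u, Γ u ∂μ := by
      simp_rw [lintegral_sub_right_eq_self]
      exact lintegral_mul_const'' _ hF

theorem lintegral_sq_lintegral_mul_sub_mul_le {F Γ : G → ℝ≥0∞} {K : G → G → ℝ≥0∞} {M : ℝ≥0∞}
    (hF : AEMeasurable F μ) (hΓ : AEMeasurable Γ μ) (hK : ∀ ξ, AEMeasurable (K ξ) μ)
    (hKM : ∀ ξ, ∫⁻ t, K ξ t ^ 2 ∂μ ≤ M) :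
    ∫⁻ ξ, (∫⁻ t, F t * Γ (ξ - t) * K ξ t ∂μ) ^ 2 ∂μ ≤
      M * ((∫⁻ t, F t ^ 2 ∂μ) * ∫⁻ u, Γ u ^ 2 ∂μ) := by
  have hF2 := hF.pow_const 2
  have hΓ2 := hΓ.pow_const 2
  have pointwise (ξ : G) : (∫⁻ t, F t * Γ (ξ - t) * K ξ t ∂μ) ^ 2 ≤
      M * ∫⁻ t, F t ^ 2 * Γ (ξ - t) ^ 2 ∂μ := by
    have hFΓ : AEMeasurable (fun t => F t * Γ (ξ - t)) μ :=
      hF.mul (hΓ.comp_quasiMeasurePreserving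
        (quasiMeasurePreserving_sub_left_of_right_invariant μ ξ))
    calc (∫⁻ t, F t * Γ (ξ - t) * K ξ t ∂μ) ^ 2
        ≤ (∫⁻ t, (F t * Γ (ξ - t)) ^ 2 ∂μ) * ∫⁻ t, K ξ t ^ 2 ∂μ :=
          ENNReal.lintegral_mul_sq_le hFΓ (hK ξ)
      _ ≤ M * ∫⁻ t, F t ^ 2 * Γ (ξ - t) ^ 2 ∂μ := by
          simp_rw [mul_pow, mul_comm M]
          gcongr
          exact hKM ξ
  calc ∫⁻ ξ, (∫⁻ t, F t * Γ (ξ - t) * K ξ t ∂μ) ^ 2 ∂μ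
      ≤ ∫⁻ ξ, M * ∫⁻ t, F t ^ 2 * Γ (ξ - t) ^ 2 ∂μ ∂μ := lintegral_mono pointwise
    _ = M * ((∫⁻ t, F t ^ 2 ∂μ) * ∫⁻ u, Γ u ^ 2 ∂μ) := by
      rw [lintegral_const_mul'' _ (hF2.mul_comp_sub hΓ2).lintegral_prod_right',
        lintegral_lintegral_mul_sub hF2 hΓ2]

end ConvolutionCauchySchwarz

theorem lintegral_add_comp_sub_sq_le {G : Type*} [MeasurableSpace G] [AddGroup G]
    [MeasurableAdd G] [MeasurableNeg G] {μ : Measure G} [μ.IsAddLeftInvariant] [μ.IsNegInvariant]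
    {w : G → ℝ≥0∞} (hw : AEMeasurable w μ) (ξ : G) :
    ∫⁻ t, (w t + w (ξ - t)) ^ 2 ∂μ ≤ 4 * ∫⁻ t, w t ^ 2 ∂μ :=
  calc ∫⁻ t, (w t + w (ξ - t)) ^ 2 ∂μ
      ≤ ∫⁻ t, 2 * (w t ^ 2 + w (ξ - t) ^ 2) ∂μ :=
        lintegral_mono fun t => ENNReal.add_sq_le_two_mul _ _
    _ = 4 * ∫⁻ t, w t ^ 2 ∂μ := by
        rw [lintegral_const_mul' _ _ (by simp), lintegral_add_left' (hw.pow_const 2),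
          lintegral_sub_left_eq_self (fun t => w t ^ 2), ← two_mul, ← mul_assoc]
        norm_num

theorem enorm_convolution_mul_le {𝕜 E : Type*} [RCLike 𝕜] [Sub E] [MeasurableSpace E]
    {μ : Measure E} (f g : E → 𝕜) (ξ : E) :
    ‖(f ⋆[ContinuousLinearMap.mul ℝ 𝕜, μ] g) ξ‖ₑ ≤ ∫⁻ t, ‖f t‖ₑ * ‖g (ξ - t)‖ₑ ∂μ := by
  simpa [convolution_def] using enorm_integral_le_lintegral_enorm (fun t => f t * g (ξ - t))

theorem lintegral_weight_mul_norm_convolution_sq_le {𝕜 E : Type*} [RCLike 𝕜]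
    [NormedAddCommGroup E] [MeasurableSpace E] [BorelSpace E] [SecondCountableTopology E]
    {μ : Measure E} [SFinite μ] [μ.IsAddLeftInvariant] [μ.IsNegInvariant]
    {s h : ℝ} (hs : 0 ≤ s) (h0 : 0 ≤ h) (h1 : h ≤ 1) {f g : E → 𝕜}
    (hf : AEStronglyMeasurable f μ) (hg : AEStronglyMeasurable g μ) :
    ∫⁻ ξ, ENNReal.ofReal ((1 + h ^ 2 * ‖ξ‖ ^ 2) ^ s *
        ‖(f ⋆[ContinuousLinearMap.mul ℝ 𝕜, μ] g) ξ‖ ^ 2) ∂μ ≤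
      ENNReal.ofReal (4 ^ s) * (4 * ∫⁻ t, ENNReal.ofReal ((1 + ‖t‖ ^ 2) ^ (-s)) ∂μ) *
        ((∫⁻ t, ENNReal.ofReal ((1 + ‖t‖ ^ 2) ^ s * ‖f t‖ ^ 2) ∂μ) *
          ∫⁻ u, ENNReal.ofReal ((1 + h ^ 2 * ‖u‖ ^ 2) ^ s * ‖g u‖ ^ 2) ∂μ) := by
  set F : E → ℝ≥0∞ := fun t => ENNReal.ofReal ((1 + ‖t‖ ^ 2) ^ (s / 2)) * ‖f t‖ₑ
  set Γ : E → ℝ≥0∞ := fun u => ENNReal.ofReal ((1 + h ^ 2 * ‖u‖ ^ 2) ^ (s / 2)) * ‖g u‖ₑ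
  set w : E → ℝ≥0∞ := fun t => ENNReal.ofReal ((1 + ‖t‖ ^ 2) ^ (-(s / 2)))
  have sq_eq {a : ℝ} (ha : 0 ≤ a) (z : 𝕜) :
      (ENNReal.ofReal (a ^ (s / 2)) * ‖z‖ₑ) ^ 2 = ENNReal.ofReal (a ^ s * ‖z‖ ^ 2) := by
    rw [mul_pow, ENNReal.ofReal_rpow_div_two_sq ha, ENNReal.ofReal_mul (by positivity),
      ← ofReal_norm, ENNReal.ofReal_pow (norm_nonneg _)]
  have hw : Measurable w := by fun_prop
  have hF : AEMeasurable F μ := by fun_prop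
  have hΓ : AEMeasurable Γ μ := by fun_prop
  have peetre (ξ t : E) : ENNReal.ofReal ((1 + h ^ 2 * ‖ξ‖ ^ 2) ^ (s / 2)) *
      (‖f t‖ₑ * ‖g (ξ - t)‖ₑ) ≤
      ENNReal.ofReal (4 ^ (s / 2)) * (F t * Γ (ξ - t) * (w t + w (ξ - t))) := by
    calc _ ≤ ENNReal.ofReal (4 ^ (s / 2) * ((1 + ‖t‖ ^ 2) ^ (s / 2) *
          (1 + h ^ 2 * ‖ξ - t‖ ^ 2) ^ (s / 2) *
          ((1 + ‖t‖ ^ 2) ^ (-(s / 2)) + (1 + ‖ξ - t‖ ^ 2) ^ (-(s / 2))))) *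
          (‖f t‖ₑ * ‖g (ξ - t)‖ₑ) := by
          gcongr
          exact one_add_sq_mul_norm_sq_rpow_le (by positivity) h0 h1 ξ t
      _ = _ := by
          simp only [F, Γ, w]
          rw [ENNReal.ofReal_mul (by positivity), ENNReal.ofReal_mul (by positivity),
            ENNReal.ofReal_mul (by positivity), ENNReal.ofReal_add (by positivity) (by positivity)]
          ring
  have at_point (ξ : E) : ENNReal.ofReal ((1 + h ^ 2 * ‖ξ‖ ^ 2) ^ s *
      ‖(f ⋆[ContinuousLinearMap.mul ℝ 𝕜, μ] g) ξ‖ ^ 2) ≤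
      ENNReal.ofReal (4 ^ s) * (∫⁻ t, F t * Γ (ξ - t) * (w t + w (ξ - t)) ∂μ) ^ 2 := by
    calc _ = (ENNReal.ofReal ((1 + h ^ 2 * ‖ξ‖ ^ 2) ^ (s / 2)) *
          ‖(f ⋆[ContinuousLinearMap.mul ℝ 𝕜, μ] g) ξ‖ₑ) ^ 2 := (sq_eq (by positivity) _).symm
      _ ≤ (∫⁻ t, ENNReal.ofReal (4 ^ (s / 2)) * (F t * Γ (ξ - t) * (w t + w (ξ - t))) ∂μ) ^ 2 := by
          gcongr
          calc _ ≤ ENNReal.ofReal ((1 + h ^ 2 * ‖ξ‖ ^ 2) ^ (s / 2)) *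
                ∫⁻ t, ‖f t‖ₑ * ‖g (ξ - t)‖ₑ ∂μ := by
                gcongr
                exact enorm_convolution_mul_le f g ξ
            _ ≤ _ := by
                rw [← lintegral_const_mul' _ _ ENNReal.ofReal_ne_top]
                exact lintegral_mono (peetre ξ)
      _ = _ := by
          rw [lintegral_const_mul' _ _ ENNReal.ofReal_ne_top, mul_pow,
            ENNReal.ofReal_rpow_div_two_sq (by norm_num)]
  calc _ ≤ ∫⁻ ξ, ENNReal.ofReal (4 ^ s) *
        (∫⁻ t, F t * Γ (ξ - t) * (w t + w (ξ - t)) ∂μ) ^ 2 ∂μ := lintegral_mono at_point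
    _ ≤ ENNReal.ofReal (4 ^ s) * ((4 * ∫⁻ t, w t ^ 2 ∂μ) *
        ((∫⁻ t, F t ^ 2 ∂μ) * ∫⁻ u, Γ u ^ 2 ∂μ)) := by
        rw [lintegral_const_mul' _ _ ENNReal.ofReal_ne_top]
        gcongr
        exact lintegral_sq_lintegral_mul_sub_mul_le hF hΓ (fun ξ => by fun_prop)
          (lintegral_add_comp_sub_sq_le hw.aemeasurable)
    _ = _ := by
        have hw2 : ∫⁻ t, w t ^ 2 ∂μ = ∫⁻ t, ENNReal.ofReal ((1 + ‖t‖ ^ 2) ^ (-s)) ∂μ :=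
          lintegral_congr fun t => by
            simp only [w]; rw [← neg_div]; exact ENNReal.ofReal_rpow_div_two_sq (by positivity) _
        rw [hw2, lintegral_congr fun t => sq_eq (by positivity) (f t),
          lintegral_congr fun u => sq_eq (by positivity) (g u)]
        ring

theorem lintegral_ofReal_one_add_norm_sq_rpow_neg_pos_lt_top {E : Type*} [NormedAddCommGroup E]
    [NormedSpace ℝ E] [FiniteDimensional ℝ E] [MeasurableSpace E] [BorelSpace E] {μ : Measure E}
    [μ.IsAddHaarMeasure] {s : ℝ} (hs : Module.finrank ℝ E < 2 * s) :
    0 < ∫⁻ t, ENNReal.ofReal ((1 + ‖t‖ ^ 2) ^ (-s)) ∂μ ∧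
      ∫⁻ t, ENNReal.ofReal ((1 + ‖t‖ ^ 2) ^ (-s)) ∂μ < ⊤ := by
  refine ⟨?_, ?_⟩
  · have hsupp : Function.support (fun t : E => ENNReal.ofReal ((1 + ‖t‖ ^ 2) ^ (-s))) = univ :=
      eq_univ_of_forall fun t => by
        rw [Function.mem_support, ENNReal.ofReal_ne_zero_iff]
        positivity
    rw [lintegral_pos_iff_support (by fun_prop), hsupp]
    exact Measure.measure_univ_pos.2 (NeZero.ne μ)
  · simpa [neg_div] using (integrable_rpow_neg_one_add_norm_sq (μ := μ) hs).lintegral_lt_top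

theorem integrable_and_integral_rpow_half_le {α : Type*} [MeasurableSpace α] {μ : Measure α}
    {X A B : α → ℝ} {C : ℝ} (hC : 0 ≤ C) (hX : 0 ≤ X) (hXm : AEStronglyMeasurable X μ)
    (hA : Integrable A μ) (hA0 : 0 ≤ A) (hB : Integrable B μ) (hB0 : 0 ≤ B)
    (hle : ∫⁻ a, ENNReal.ofReal (X a) ∂μ ≤ ENNReal.ofReal (C ^ 2) *
      ((∫⁻ a, ENNReal.ofReal (A a) ∂μ) * ∫⁻ a, ENNReal.ofReal (B a) ∂μ)) :
    Integrable X μ ∧ (∫ a, X a ∂μ) ^ (1 / 2 : ℝ) ≤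
      C * ((∫ a, A a ∂μ) ^ (1 / 2 : ℝ) * (∫ a, B a ∂μ) ^ (1 / 2 : ℝ)) := by
  have hAint : 0 ≤ ∫ a, A a ∂μ := integral_nonneg hA0
  have hBint : 0 ≤ ∫ a, B a ∂μ := integral_nonneg hB0
  rw [← ofReal_integral_eq_lintegral_ofReal hA (ae_of_all _ hA0),
    ← ofReal_integral_eq_lintegral_ofReal hB (ae_of_all _ hB0), ← ENNReal.ofReal_mul hAint,
    ← ENNReal.ofReal_mul (by positivity)] at hle
  have hXint : Integrable X μ :=
    ⟨hXm, (hasFiniteIntegral_iff_ofReal (ae_of_all _ hX)).2 (hle.trans_lt ENNReal.ofReal_lt_top)⟩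
  rw [← ofReal_integral_eq_lintegral_ofReal hXint (ae_of_all _ hX),
    ENNReal.ofReal_le_ofReal_iff (by positivity)] at hle
  refine ⟨hXint, ?_⟩
  calc (∫ a, X a ∂μ) ^ (1 / 2 : ℝ) ≤ (C ^ 2 * ((∫ a, A a ∂μ) * ∫ a, B a ∂μ)) ^ (1 / 2 : ℝ) :=
        rpow_le_rpow (integral_nonneg hX) hle (by norm_num)
    _ = _ := by
        rw [mul_rpow (by positivity) (by positivity), mul_rpow hAint hBint, ← Real.rpow_two,
          ← Real.rpow_mul hC]
        norm_num

/-- `‖uv‖_{H_h^s} ≤ C ‖u‖_{H^s} ‖v‖_{H_h^s}` for `s > n/2`, uniformly in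
`h ∈ (0,1]`, stated on the Fourier side: with `f = û`, `g = v̂`, the Fourier transform of
`uv` is (up to normalization) `f ⋆ g`, `‖u‖_{H^s} = ‖⟨ξ⟩^s f‖_{L²}`,
`‖v‖_{H_h^s} = ‖⟨hξ⟩^s g‖_{L²}`. -/
theorem stmt_2 (n : ℕ) (s : ℝ) (hs : s > n / 2) :
    ∃ C > 0, ∀ h : ℝ, h ∈ Set.Ioc (0 : ℝ) 1 →
      ∀ f g : EuclideanSpace ℝ (Fin n) → ℂ,
        AEStronglyMeasurable f volume → AEStronglyMeasurable g volume →
        Integrable (fun ξ => (1 + ‖ξ‖ ^ 2) ^ s * ‖f ξ‖ ^ 2) volume →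
        Integrable (fun ξ => (1 + h ^ 2 * ‖ξ‖ ^ 2) ^ s * ‖g ξ‖ ^ 2) volume →
        Integrable (fun ξ =>
            (1 + h ^ 2 * ‖ξ‖ ^ 2) ^ s *
              ‖(f ⋆[ContinuousLinearMap.mul ℝ ℂ] g) ξ‖ ^ 2) volume ∧
        (∫ ξ, (1 + h ^ 2 * ‖ξ‖ ^ 2) ^ s *
              ‖(f ⋆[ContinuousLinearMap.mul ℝ ℂ] g) ξ‖ ^ 2) ^ (1 / 2 : ℝ) ≤
          C * ((∫ ξ, (1 + ‖ξ‖ ^ 2) ^ s * ‖f ξ‖ ^ 2) ^ (1 / 2 : ℝ) *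
               (∫ ξ, (1 + h ^ 2 * ‖ξ‖ ^ 2) ^ s * ‖g ξ‖ ^ 2) ^ (1 / 2 : ℝ)) := by
  have hs0 : 0 ≤ s := le_trans (by positivity) hs.le
  obtain ⟨hI0, hItop⟩ := lintegral_ofReal_one_add_norm_sq_rpow_neg_pos_lt_top
    (μ := (volume : Measure (EuclideanSpace ℝ (Fin n)))) (s := s)
    (by rw [finrank_euclideanSpace_fin]; linarith)
  set I := ∫⁻ t : EuclideanSpace ℝ (Fin n), ENNReal.ofReal ((1 + ‖t‖ ^ 2) ^ (-s))
  have hIreal : 0 < (4 * I).toReal := ENNReal.toReal_pos (by positivity) (by finiteness)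
  refine ⟨√(4 ^ s * (4 * I).toReal), by positivity, ?_⟩
  rintro h ⟨hh0, hh1⟩ f g hf hg hF hG
  have hconv : AEStronglyMeasurable (f ⋆[ContinuousLinearMap.mul ℝ ℂ] g) volume :=
    (hf.convolution_integrand _ hg).integral_prod_right'
  refine integrable_and_integral_rpow_half_le (Real.sqrt_nonneg _) (fun ξ => by positivity)
    (by fun_prop) hF (fun ξ => by positivity) hG (fun u => by positivity) ?_
  rw [Real.sq_sqrt (by positivity), ENNReal.ofReal_mul (by positivity),
    ENNReal.ofReal_toReal (by finiteness)]
  exact lintegral_weight_mul_norm_convolution_sq_le hs0 hh0.le hh1 hf hg
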